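/- Let α > 2 be a real number. Then the function T ↦ ρ(T, α) := T^{2/α} · ∫_{T^{−2/α}}^∞ (1 + u^{α/2})^{−1} du is strictly increasing on (0, ∞). -/

import Mathlib

/-!
The factor `T ^ (2 / α)` is strictly increasing, while the lower limit `T ^ (-(2 / α))` decreases,
so the tail integral of the positive integrand grows with `T`; it is finite because the integrand
is dominated by `u ^ (-(α / 2))` with `α / 2 > 1`, and positive because the integrand is.
-/

open Real MeasureTheory Set

theorem setIntegral_pos_of_pos_on {X : Type*} [MeasurableSpace X] {μ : Measure X} {s : Set X}
    {f : X → ℝ} (hs : MeasurableSet s) (hμs : μ s ≠ 0) (hf : IntegrableOn f s μ)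
    (hpos : ∀ x ∈ s, 0 < f x) : 0 < ∫ x in s, f x ∂μ := by
  rw [setIntegral_pos_iff_support_of_nonneg_ae
    (ae_restrict_of_forall_mem hs fun x hx => (hpos x hx).le) hf,
    inter_eq_right.2 fun x hx => Function.mem_support.2 (hpos x hx).ne']
  exact pos_iff_ne_zero.2 hμs

theorem setIntegral_Ioi_le_of_le {f : ℝ → ℝ} {a b : ℝ} (hab : a ≤ b) (hf : IntegrableOn f (Ioi a))
    (hf₀ : ∀ x ∈ Ioi a, 0 ≤ f x) : ∫ x in Ioi b, f x ≤ ∫ x in Ioi a, f x :=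
  setIntegral_mono_set hf (ae_restrict_of_forall_mem measurableSet_Ioi hf₀)
    (Ioi_subset_Ioi hab).eventuallyLE

theorem one_add_rpow_pos {u : ℝ} (hu : 0 ≤ u) (p : ℝ) : 0 < 1 + u ^ p := by
  positivity

theorem integrableOn_Ioi_inv_one_add_rpow {p a : ℝ} (hp : 1 < p) (ha : 0 < a) :
    IntegrableOn (fun u : ℝ => (1 + u ^ p)⁻¹) (Ioi a) := by
  have hcont : ContinuousOn (fun u : ℝ => (1 + u ^ p)⁻¹) (Ioi a) := fun u hu =>
    have hu₀ : 0 < u := ha.trans hu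
    ((continuousAt_const.add (continuousAt_id.rpow_const (Or.inl hu₀.ne'))).inv₀
      (one_add_rpow_pos hu₀.le p).ne').continuousWithinAt
  refine (integrableOn_Ioi_rpow_of_lt (neg_lt_neg hp) ha).mono'
    (hcont.aestronglyMeasurable measurableSet_Ioi) (ae_restrict_of_forall_mem measurableSet_Ioi ?_)
  intro u hu
  have hu₀ : 0 < u := ha.trans hu
  rw [norm_of_nonneg (inv_pos.2 (one_add_rpow_pos hu₀.le p)).le, rpow_neg hu₀.le]
  exact inv_anti₀ (rpow_pos_of_pos hu₀ p) (le_add_of_nonneg_left zero_le_one)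

/-- For `α > 2`, the map
`T ↦ ρ(T,α) = T^{2/α} ∫_{T^{−2/α}}^∞ (1+u^{α/2})⁻¹ du` is strictly increasing on `(0, ∞)`. -/
theorem rho_strictMono
    (α : ℝ) (hα : 2 < α) :
    StrictMonoOn
      (fun T : ℝ => T ^ (2 / α) * ∫ u in Ioi (T ^ (-(2 / α))), (1 + u ^ (α / 2))⁻¹)
      (Ioi 0) := by
  intro T₁ hT₁ T₂ hT₂ hT
  have hexp : 0 < 2 / α := by positivity
  have hp : 1 < α / 2 := by linarith
  have ha₁ : 0 < T₁ ^ (-(2 / α)) := rpow_pos_of_pos hT₁ _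
  have ha₂ : 0 < T₂ ^ (-(2 / α)) := rpow_pos_of_pos hT₂ _
  have hfactor : T₁ ^ (2 / α) < T₂ ^ (2 / α) := rpow_lt_rpow hT₁.le hT hexp
  have hlimit : T₂ ^ (-(2 / α)) ≤ T₁ ^ (-(2 / α)) :=
    (rpow_lt_rpow_of_neg hT₁ hT (neg_lt_zero.2 hexp)).le
  have htail : (∫ u in Ioi (T₁ ^ (-(2 / α))), (1 + u ^ (α / 2))⁻¹)
      ≤ ∫ u in Ioi (T₂ ^ (-(2 / α))), (1 + u ^ (α / 2))⁻¹ :=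
    setIntegral_Ioi_le_of_le hlimit (integrableOn_Ioi_inv_one_add_rpow hp ha₂)
      fun u hu => (inv_pos.2 (one_add_rpow_pos (ha₂.trans hu).le _)).le
  have htail_pos : 0 < ∫ u in Ioi (T₁ ^ (-(2 / α))), (1 + u ^ (α / 2))⁻¹ :=
    setIntegral_pos_of_pos_on measurableSet_Ioi (by simp)
      (integrableOn_Ioi_inv_one_add_rpow hp ha₁)
      fun u hu => inv_pos.2 (one_add_rpow_pos (ha₁.trans hu).le _)
  exact mul_lt_mul hfactor htail htail_pos (rpow_nonneg hT₂.le _)
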